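/- arXiv:1810.11619 — 4 statements merged into one kernel-verified Lean document; each statement's English description precedes it below -/
import Mathlib

section
/- Let T > 0, let α : ℝ × ℝ × ℝ → ℝ be continuously differentiable, and let V : ℝ × [0,T] → ℝ be sufficiently smooth (three times continuously differentiable in x, once in t, with all relevant mixed partial derivatives continuous and equal) with ∂ₓV(x,t) > 0 for all (x,t). Define φ(x,t) = -∂ₓ²V(x,t)/∂ₓV(x,t). If V satisfies ∂ₜV(x,t) = α(x,t,φ(x,t))·∂ₓV(x,t) for all (x,t) ∈ ℝ × [0,T], then φ satisfies the quasi-linear parabolic equation ∂ₜφ(x,t) + ∂ₓ( ∂ₓ[α(x,t,φ(x,t))] - α(x,t,φ(x,t))·φ(x,t) ) = 0 for all (x,t) ∈ ℝ × [0,T), where ∂ₓ[α(x,t,φ(x,t))] denotes the total derivative αₓ'(x,t,φ(x,t)) + α_φ'(x,t,φ(x,t))·∂ₓφ(x,t). -/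
noncomputable def pdx (f : ℝ × ℝ → ℝ) : ℝ × ℝ → ℝ := fun p => fderiv ℝ f p (1, 0)
noncomputable def pdt (f : ℝ × ℝ → ℝ) : ℝ × ℝ → ℝ := fun p => fderiv ℝ f p (0, 1)

lemma pdx_contDiff {f : ℝ × ℝ → ℝ} (hf : ContDiff ℝ (⊤ : ℕ∞) f) : ContDiff ℝ (⊤ : ℕ∞) (pdx f) :=
  (hf.fderiv_right (by simp)).clm_apply contDiff_const

lemma pdt_contDiff {f : ℝ × ℝ → ℝ} (hf : ContDiff ℝ (⊤ : ℕ∞) f) : ContDiff ℝ (⊤ : ℕ∞) (pdt f) :=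
  (hf.fderiv_right (by simp)).clm_apply contDiff_const

lemma hasDerivAt_sx {f : ℝ × ℝ → ℝ} (hf : Differentiable ℝ f) (x t : ℝ) :
    HasDerivAt (fun y => f (y, t)) (pdx f (x, t)) x := by
  have h := (hf (x, t)).hasFDerivAt.comp_hasDerivAt x
    (HasDerivAt.prodMk (hasDerivAt_id x) (hasDerivAt_const x t))
  exact h

lemma hasDerivAt_st {f : ℝ × ℝ → ℝ} (hf : Differentiable ℝ f) (x t : ℝ) :
    HasDerivAt (fun s => f (x, s)) (pdt f (x, t)) t := by
  have h := (hf (x, t)).hasFDerivAt.comp_hasDerivAt t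
    (HasDerivAt.prodMk (hasDerivAt_const t x) (hasDerivAt_id t))
  exact h

lemma pdx_pdt_comm {f : ℝ × ℝ → ℝ} (hf : ContDiff ℝ (⊤ : ℕ∞) f) :
    pdt (pdx f) = pdx (pdt f) := by
  funext p
  have hdf : Differentiable ℝ (fderiv ℝ f) := (hf.fderiv_right (m := 1) (by exact WithTop.coe_le_coe.mpr le_top)).differentiable one_ne_zero
  have hsym := second_derivative_symmetric (f := f) (f' := fderiv ℝ f)
      (fun y => (hf.differentiable (by simp) y).hasFDerivAt) (hdf p).hasFDerivAt
      ((0 : ℝ), (1 : ℝ)) ((1 : ℝ), (0 : ℝ))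
  show fderiv ℝ (fun q => fderiv ℝ f q (1, 0)) p (0, 1)
      = fderiv ℝ (fun q => fderiv ℝ f q (0, 1)) p (1, 0)
  rw [fderiv_clm_apply (hdf p) (differentiableAt_const _),
      fderiv_clm_apply (hdf p) (differentiableAt_const _)]
  simp [hsym]

/-- forward direction of the Riccati equivalence theorem:
if `V` is a sufficiently smooth solution of the transformed HJB equation
`∂ₜV = α(x,t,φ)·∂ₓV` with `∂ₓV > 0`, where `φ = -∂ₓ²V/∂ₓV` is the Riccati
transformation, then `φ` solves the quasi-linear parabolic PDE
`∂ₜφ + ∂ₓ(∂ₓ[α(x,t,φ(x,t))] - α(x,t,φ(x,t))·φ(x,t)) = 0` on `ℝ × [0,T)`. -/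
theorem stmt_1 (T : ℝ) (hT : 0 < T)
    (α : ℝ → ℝ → ℝ → ℝ)
    (hα : ContDiff ℝ 1 (fun p : ℝ × ℝ × ℝ => α p.1 p.2.1 p.2.2))
    (V : ℝ → ℝ → ℝ) (hV : ContDiff ℝ (⊤ : ℕ∞) (Function.uncurry V))
    (hVx : ∀ x t, t ∈ Set.Icc 0 T → 0 < deriv (fun y => V y t) x)
    (φ : ℝ → ℝ → ℝ)
    (hφ : ∀ x t, φ x t =
      -(deriv (fun y => deriv (fun z => V z t) y) x) / deriv (fun y => V y t) x)
    (hpde : ∀ x t, t ∈ Set.Icc 0 T →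
      deriv (fun s => V x s) t = α x t (φ x t) * deriv (fun y => V y t) x) :
    ∀ x t, t ∈ Set.Ico 0 T →
      deriv (fun s => φ x s) t +
        deriv (fun y => deriv (fun z => α z t (φ z t)) y - α y t (φ y t) * φ y t) x = 0 := by
  intro x t ht
  have ht' : t ∈ Set.Icc 0 T := ⟨ht.1, ht.2.le⟩
  set F := Function.uncurry V with hFdef
  have hFd : Differentiable ℝ F := hV.differentiable (by simp)
  have hP1s : ContDiff ℝ (⊤ : ℕ∞) (pdx F) := pdx_contDiff hV
  have hP1d : Differentiable ℝ (pdx F) := hP1s.differentiable (by simp)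
  have hP2s : ContDiff ℝ (⊤ : ℕ∞) (pdx (pdx F)) := pdx_contDiff hP1s
  have hP2d : Differentiable ℝ (pdx (pdx F)) := hP2s.differentiable (by simp)
  have hQ0s : ContDiff ℝ (⊤ : ℕ∞) (pdt F) := pdt_contDiff hV
  have hQ0d : Differentiable ℝ (pdt F) := hQ0s.differentiable (by simp)
  have hQ1d : Differentiable ℝ (pdx (pdt F)) := (pdx_contDiff hQ0s).differentiable (by simp)
  -- identify the curried derivatives with the partial derivative operators
  have e1 : ∀ (y s : ℝ), deriv (fun z => V z s) y = pdx F (y, s) :=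
    fun y s => (hasDerivAt_sx hFd y s).deriv
  have e2 : ∀ (y s : ℝ), deriv (fun z => deriv (fun w => V w s) z) y = pdx (pdx F) (y, s) := by
    intro y s
    have h : (fun z => deriv (fun w => V w s) z) = fun z => pdx F (z, s) :=
      funext fun z => e1 z s
    rw [h]
    exact (hasDerivAt_sx hP1d y s).deriv
  have hpos : ∀ y s, s ∈ Set.Icc 0 T → 0 < pdx F (y, s) := by
    intro y s hs
    rw [← e1]
    exact hVx y s hs
  have hφ' : ∀ y s, φ y s = -(pdx (pdx F) (y, s)) / pdx F (y, s) := by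
    intro y s
    rw [hφ, e2, e1]
  have key : ∀ y : ℝ, α y t (φ y t) = pdt F (y, t) / pdx F (y, t) := by
    intro y
    rw [eq_div_iff (hpos y t ht').ne']
    have h := hpde y t ht'
    rw [e1] at h
    rw [← h]
    exact (hasDerivAt_st hFd y t).deriv
  -- rewrite the two functions being differentiated
  have hfs : (fun s => φ x s) = fun s => -(pdx (pdx F) (x, s)) / pdx F (x, s) :=
    funext fun s => hφ' x s
  have hfx : (fun y => deriv (fun z => α z t (φ z t)) y - α y t (φ y t) * φ y t) =
      fun y =>
        (pdx (pdt F) (y, t) * pdx F (y, t) - pdt F (y, t) * pdx (pdx F) (y, t))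
            / pdx F (y, t) ^ 2
          - pdt F (y, t) / pdx F (y, t) * (-(pdx (pdx F) (y, t)) / pdx F (y, t)) := by
    funext y
    have hin : (fun z => α z t (φ z t)) = fun z => pdt F (z, t) / pdx F (z, t) :=
      funext fun z => key z
    rw [hin, key y, hφ' y t,
      (show HasDerivAt (fun z => pdt F (z, t) / pdx F (z, t)) _ y from
        (hasDerivAt_sx hQ0d y t).div (hasDerivAt_sx hP1d y t) (hpos y t ht').ne').deriv]
  have hne : pdx F (x, t) ≠ 0 := (hpos x t ht').ne'
  have hne2 : pdx F (x, t) ^ 2 ≠ 0 := pow_ne_zero _ hne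
  have Ht : HasDerivAt (fun s => -(pdx (pdx F) (x, s)) / pdx F (x, s)) _ t :=
    ((hasDerivAt_st hP2d x t).neg).div (hasDerivAt_st hP1d x t) hne
  have A := hasDerivAt_sx hQ1d x t
  have B := hasDerivAt_sx hP1d x t
  have C := hasDerivAt_sx hQ0d x t
  have D := hasDerivAt_sx hP2d x t
  have Hx : HasDerivAt (fun y =>
        (pdx (pdt F) (y, t) * pdx F (y, t) - pdt F (y, t) * pdx (pdx F) (y, t))
            / pdx F (y, t) ^ 2
          - pdt F (y, t) / pdx F (y, t) * (-(pdx (pdx F) (y, t)) / pdx F (y, t))) _ x :=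
    (((A.mul B).sub (C.mul D)).div (B.pow 2) hne2).sub
    ((C.div B hne).mul (D.neg.div B hne))
  rw [hfs, hfx, Ht.deriv, Hx.deriv]
  have s1 : pdt (pdx F) = pdx (pdt F) := pdx_pdt_comm hV
  have s2 : pdt (pdx (pdx F)) = pdx (pdx (pdt F)) := by
    rw [pdx_pdt_comm hP1s, s1]
  rw [s1, s2]
  simp only [Pi.pow_apply, Pi.mul_apply, Pi.sub_apply, Pi.div_apply, Pi.neg_apply]
  field_simp
  ring
end

section
/- Let T > 0, let α : ℝ × [0,T] × ℝ → ℝ be continuously differentiable, let U : ℝ → ℝ be twice continuously differentiable with U' > 0, and fix x₀ ∈ ℝ. Let V : ℝ × [0,T] → ℝ be sufficiently smooth with ∂ₓV > 0, satisfying ∂ₜV(x,t) = α(x,t,φ(x,t))·∂ₓV(x,t) and V(x,T) = U(x), where φ(x,t) = -∂ₓ²V(x,t)/∂ₓV(x,t). Define ω(t) = ∂ₓ[α(x₀,t,φ(x₀,t))] - α(x₀,t,φ(x₀,t))·φ(x₀,t) (total x-derivative), γ(t) = α(x₀,t,φ(x₀,t)), b(t) = U'(x₀)·exp(-∫ₜᵀ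 ω(τ)dτ), and a(t) = U(x₀) - ∫ₜᵀ γ(τ)b(τ)dτ. Then for all (x,t) ∈ ℝ × [0,T]: V(x,t) = a(t) + b(t)·∫_{x₀}^{x} exp( -∫_{x₀}^{ξ} φ(η,t) dη ) dξ. -/
private lemma partialx {f : ℝ×ℝ → ℝ} (hf : Differentiable ℝ f) (x t : ℝ) :
    HasDerivAt (fun y => f (y, t)) (fderiv ℝ f (x, t) (1, 0)) x := by
  have h1 : HasDerivAt (fun y : ℝ => ((y:ℝ), t)) ((1:ℝ), (0:ℝ)) x :=
    (hasDerivAt_id x).prodMk (hasDerivAt_const x t)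
  exact ((hf (x,t)).hasFDerivAt.comp_hasDerivAt x h1)

private lemma partialt {f : ℝ×ℝ → ℝ} (hf : Differentiable ℝ f) (x t : ℝ) :
    HasDerivAt (fun s => f (x, s)) (fderiv ℝ f (x, t) (0, 1)) t := by
  have h1 : HasDerivAt (fun s : ℝ => (x, (s:ℝ))) ((0:ℝ), (1:ℝ)) t :=
    (hasDerivAt_const t x).prodMk (hasDerivAt_id t)
  exact ((hf (x,t)).hasFDerivAt.comp_hasDerivAt t h1)

private lemma clairaut {f : ℝ×ℝ → ℝ} (hf : ContDiff ℝ (⊤:ℕ∞) f) (q : ℝ×ℝ) (v w : ℝ×ℝ) :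
    fderiv ℝ (fun p => fderiv ℝ f p v) q w = fderiv ℝ (fun p => fderiv ℝ f p w) q v := by
  have hd : Differentiable ℝ f := hf.differentiable (by simp)
  have hd2 : Differentiable ℝ (fderiv ℝ f) :=
    (hf.fderiv_right (m := (⊤:ℕ∞)) le_rfl).differentiable (by simp)
  have key : ∀ u : ℝ×ℝ, fderiv ℝ (fun p => fderiv ℝ f p u) q =
      (fderiv ℝ (fderiv ℝ f) q).flip u := by
    intro u
    rw [fderiv_clm_apply (hd2 q) (differentiableAt_const u), fderiv_fun_const]
    simp
  rw [key v, key w]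
  simp only [ContinuousLinearMap.flip_apply]
  exact second_derivative_symmetric (fun y => (hd y).hasFDerivAt) ((hd2 q).hasFDerivAt) w v

/-- representation formula in the Riccati equivalence theorem:
if `V` is a sufficiently smooth, `x`-increasing solution of the transformed HJB
equation `∂ₜV = α(x,t,φ)·∂ₓV` with terminal condition `V(·,T) = U`, where
`φ = -∂ₓ²V/∂ₓV`, then `V(x,t) = a(t) + b(t)·∫_{x₀}^{x} exp(-∫_{x₀}^{ξ} φ(η,t) dη) dξ`
with `b(t) = U'(x₀)e^{-∫ₜᵀ ω}`, `a(t) = U(x₀) - ∫ₜᵀ γ(τ)b(τ)dτ`,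
`ω(t) = ∂ₓ[α(x₀,t,φ(x₀,t))] - α(x₀,t,φ(x₀,t))φ(x₀,t)` and `γ(t) = α(x₀,t,φ(x₀,t))`. -/
theorem stmt_9 (T : ℝ) (hT : 0 < T)
    (α : ℝ → ℝ → ℝ → ℝ)
    (hα : ContDiff ℝ 1 (fun p : ℝ × ℝ × ℝ => α p.1 p.2.1 p.2.2))
    (U : ℝ → ℝ) (hU : ContDiff ℝ 2 U) (hU' : ∀ x, 0 < deriv U x)
    (x₀ : ℝ)
    (V : ℝ → ℝ → ℝ) (hV : ContDiff ℝ (⊤ : ℕ∞) (Function.uncurry V))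
    (hVx : ∀ x t, t ∈ Set.Icc 0 T → 0 < deriv (fun y => V y t) x)
    (φ : ℝ → ℝ → ℝ)
    (hφ : ∀ x t, φ x t =
      -(deriv (fun y => deriv (fun z => V z t) y) x) / deriv (fun y => V y t) x)
    (hpde : ∀ x t, t ∈ Set.Icc 0 T →
      deriv (fun s => V x s) t = α x t (φ x t) * deriv (fun y => V y t) x)
    (hVT : ∀ x, V x T = U x)
    (ω γ b a : ℝ → ℝ)
    (hω : ∀ t, ω t = deriv (fun z => α z t (φ z t)) x₀ - α x₀ t (φ x₀ t) * φ x₀ t)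
    (hγ : ∀ t, γ t = α x₀ t (φ x₀ t))
    (hb : ∀ t, b t = deriv U x₀ * Real.exp (-∫ τ in t..T, ω τ))
    (ha : ∀ t, a t = U x₀ - ∫ τ in t..T, γ τ * b τ) :
    ∀ x t, t ∈ Set.Icc 0 T →
      V x t = a t + b t * ∫ ξ in x₀..x, Real.exp (-∫ η in x₀..ξ, φ η t) := by
  -- setup
  set f : ℝ×ℝ → ℝ := Function.uncurry V with hfdef
  have hfs : ContDiff ℝ (⊤:ℕ∞) f := hV.of_le (by simp)
  have hfd : Differentiable ℝ f := hfs.differentiable (by simp)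
  set g1 : ℝ×ℝ → ℝ := fun p => fderiv ℝ f p (1,0) with hg1def
  set g2 : ℝ×ℝ → ℝ := fun p => fderiv ℝ f p (0,1) with hg2def
  have hg1s : ContDiff ℝ (⊤:ℕ∞) g1 :=
    (hfs.fderiv_right (m := (⊤:ℕ∞)) le_rfl).clm_apply contDiff_const
  have hg2s : ContDiff ℝ (⊤:ℕ∞) g2 :=
    (hfs.fderiv_right (m := (⊤:ℕ∞)) le_rfl).clm_apply contDiff_const
  have hg1d : Differentiable ℝ g1 := hg1s.differentiable (by simp)
  have hg2d : Differentiable ℝ g2 := hg2s.differentiable (by simp)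
  have hVx' : ∀ x t, HasDerivAt (fun y => V y t) (g1 (x,t)) x := fun x t => partialx hfd x t
  have hVt' : ∀ x t, HasDerivAt (fun s => V x s) (g2 (x,t)) t := fun x t => partialt hfd x t
  have hdx : ∀ x t, deriv (fun y => V y t) x = g1 (x,t) := fun x t => (hVx' x t).deriv
  have hdt : ∀ x t, deriv (fun s => V x s) t = g2 (x,t) := fun x t => (hVt' x t).deriv
  have hg1pos : ∀ x t, t ∈ Set.Icc 0 T → 0 < g1 (x,t) := by
    intro x t ht; rw [← hdx]; exact hVx x t ht
  -- φ in terms of g1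
  have hφ' : ∀ x t, φ x t = -(fderiv ℝ g1 (x,t) (1,0)) / g1 (x,t) := by
    intro x t
    have h1 : deriv (fun y => deriv (fun z => V z t) y) x = fderiv ℝ g1 (x,t) (1,0) := by
      have he : (fun y => deriv (fun z => V z t) y) = (fun y => g1 (y,t)) := by
        funext y; exact hdx y t
      rw [he, (partialx hg1d x t).deriv]
    rw [hφ x t, hdx, h1]
  have hfdg1 : ∀ x t, t ∈ Set.Icc 0 T →
      fderiv ℝ g1 (x,t) (1,0) = -(φ x t) * g1 (x,t) := by
    intro x t ht
    rw [hφ' x t]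
    field_simp
    rw [mul_div_assoc, div_self (hg1pos x t ht).ne', mul_one]
  -- spatial derivative of g1
  have hgx : ∀ x t, t ∈ Set.Icc 0 T →
      HasDerivAt (fun y => g1 (y,t)) (-(φ x t) * g1 (x,t)) x := by
    intro x t ht
    have := partialx hg1d x t
    rwa [hfdg1 x t ht] at this
  -- continuity helpers
  have hc1 : ∀ t : ℝ, Continuous (fun y => g1 (y,t)) :=
    fun t => hg1s.continuous.comp (continuous_id.prodMk continuous_const)
  have hcg1t : Continuous (fun s => g1 (x₀,s)) :=
    hg1s.continuous.comp (continuous_const.prodMk continuous_id)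
  have hc2 : Continuous (fun s => g2 (x₀,s)) :=
    hg2s.continuous.comp (continuous_const.prodMk continuous_id)
  have hcfd : Continuous (fun p : ℝ×ℝ => fderiv ℝ g1 p (1,0)) :=
    ((hg1s.fderiv_right (m := (⊤:ℕ∞)) le_rfl).clm_apply contDiff_const).continuous
  have hcfd2 : Continuous (fun s : ℝ => fderiv ℝ g1 (x₀,s) (0,1)) :=
    (((hg1s.fderiv_right (m := (⊤:ℕ∞)) le_rfl).clm_apply
      contDiff_const).continuous).comp (continuous_const.prodMk continuous_id)
  -- ODE for B(s) = g1 (x₀, s)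
  have hBode : ∀ s ∈ Set.Icc (0:ℝ) T,
      HasDerivAt (fun r => g1 (x₀,r)) (ω s * g1 (x₀,s)) s := by
    intro s hs
    have base := partialt hg1d x₀ s
    have hsw : fderiv ℝ g1 (x₀,s) (0,1) = fderiv ℝ g2 (x₀,s) (1,0) := by
      rw [hg1def, hg2def]
      exact clairaut hfs (x₀,s) (1,0) (0,1)
    have hfun : (fun z => g2 (z,s)) = (fun z => α z s (φ z s) * g1 (z,s)) := by
      funext z
      rw [← hdt z s, hpde z s hs, hdx]
    have hder2 : fderiv ℝ g2 (x₀,s) (1,0) = deriv (fun z => g2 (z,s)) x₀ :=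
      ((partialx hg2d x₀ s).deriv).symm
    have hφdiff : DifferentiableAt ℝ (fun z => φ z s) x₀ := by
      have heq : (fun z => φ z s) = fun z => -(fderiv ℝ g1 (z,s) (1,0)) / g1 (z,s) := by
        funext z; exact hφ' z s
      rw [heq]
      have h1 : DifferentiableAt ℝ (fun z => fderiv ℝ g1 (z,s) (1,0)) x₀ := by
        have hd : Differentiable ℝ (fun p : ℝ×ℝ => fderiv ℝ g1 p (1,0)) :=
          ((hg1s.fderiv_right (m := (⊤:ℕ∞)) le_rfl).clm_apply
            contDiff_const).differentiable (by simp)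
        exact (hd (x₀,s)).comp (f := fun z : ℝ => (z, s)) x₀ (differentiableAt_fun_id.prodMk (differentiableAt_const s))
      have h2 : DifferentiableAt ℝ (fun z => g1 (z,s)) x₀ :=
        ((hg1d (x₀,s)).comp (f := fun z : ℝ => (z, s)) x₀ (differentiableAt_fun_id.prodMk (differentiableAt_const s)))
      exact (h1.neg).div h2 (hg1pos x₀ s hs).ne'
    have hαdiff : DifferentiableAt ℝ (fun z => α z s (φ z s)) x₀ := by
      have hcomp : (fun z => α z s (φ z s)) =
          (fun p : ℝ × ℝ × ℝ => α p.1 p.2.1 p.2.2) ∘ (fun z => (z, s, φ z s)) := rfl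
      rw [hcomp]
      exact ((hα.differentiable one_ne_zero) (x₀, s, φ x₀ s)).comp x₀
        (differentiableAt_id.prodMk ((differentiableAt_const s).prodMk hφdiff))
    have hg1zd : DifferentiableAt ℝ (fun z => g1 (z,s)) x₀ :=
      ((hg1d (x₀,s)).comp (f := fun z : ℝ => (z, s)) x₀ (differentiableAt_fun_id.prodMk (differentiableAt_const s)))
    have hprod : deriv (fun z => α z s (φ z s) * g1 (z,s)) x₀ =
        deriv (fun z => α z s (φ z s)) x₀ * g1 (x₀,s) +
          α x₀ s (φ x₀ s) * (-(φ x₀ s) * g1 (x₀,s)) := by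
      rw [deriv_fun_mul hαdiff hg1zd]
      congr 1
      rw [(hgx x₀ s hs).deriv]
    have hkey : fderiv ℝ g1 (x₀,s) (0,1) = ω s * g1 (x₀,s) := by
      rw [hsw, hder2, hfun, hprod, hω s]
      ring
    rwa [hkey] at base
  -- B(t) = b(t) on [0,T]
  have hBeq : ∀ t ∈ Set.Icc (0:ℝ) T, g1 (x₀,t) = b t := by
    intro t ht
    have hsub : Set.uIcc t T ⊆ Set.Icc 0 T := by
      rw [Set.uIcc_of_le ht.2]
      exact Set.Icc_subset_Icc ht.1 le_rfl
    have hM : ∀ s ∈ Set.uIcc t T,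
        HasDerivAt (fun r => Real.log (g1 (x₀,r))) (ω s) s := by
      intro s hs
      have hs' := hsub hs
      have h := (hBode s hs').log (hg1pos x₀ s hs').ne'
      rwa [mul_div_assoc, div_self (hg1pos x₀ s hs').ne', mul_one] at h
    have hωeq : ∀ s ∈ Set.Icc (0:ℝ) T, ω s = fderiv ℝ g1 (x₀,s) (0,1) / g1 (x₀,s) := by
      intro s hs
      have h1 := (hBode s hs).deriv
      have h2 := (partialt hg1d x₀ s).deriv
      rw [h2] at h1
      rw [h1, mul_div_assoc, div_self (hg1pos x₀ s hs).ne', mul_one]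
    have hωint : IntervalIntegrable ω MeasureTheory.volume t T := by
      apply ContinuousOn.intervalIntegrable
      exact (ContinuousOn.div hcfd2.continuousOn hcg1t.continuousOn
        (fun s hs => (hg1pos x₀ s (hsub hs)).ne')).congr
        (fun s hs => hωeq s (hsub hs))
    have hFTC : ∫ s in t..T, ω s =
        Real.log (g1 (x₀,T)) - Real.log (g1 (x₀,t)) :=
      intervalIntegral.integral_eq_sub_of_hasDerivAt hM hωint
    have hBT : g1 (x₀,T) = deriv U x₀ := by
      rw [← hdx x₀ T]
      congr 1
      funext y; exact hVT y
    have hpt : 0 < g1 (x₀,t) := hg1pos x₀ t ht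
    have hpT : 0 < g1 (x₀,T) := hg1pos x₀ T ⟨hT.le, le_rfl⟩
    rw [hb t, ← hBT, hFTC, neg_sub, Real.exp_sub, Real.exp_log hpt, Real.exp_log hpT]
    field_simp
  -- A(t) = a(t) on [0,T]
  have hAeq : ∀ t ∈ Set.Icc (0:ℝ) T, V x₀ t = a t := by
    intro t ht
    have hsub : Set.uIcc t T ⊆ Set.Icc 0 T := by
      rw [Set.uIcc_of_le ht.2]
      exact Set.Icc_subset_Icc ht.1 le_rfl
    have hγb : ∀ s ∈ Set.uIcc t T, (fun s => γ s * b s) s = (fun s => g2 (x₀,s)) s := by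
      intro s hs
      have hs' := hsub hs
      simp only
      rw [hγ s, ← hBeq s hs', ← hdx x₀ s, ← hpde x₀ s hs', hdt]
    have hFTC2 : ∫ s in t..T, g2 (x₀,s) = V x₀ T - V x₀ t :=
      intervalIntegral.integral_eq_sub_of_hasDerivAt (fun s _ => hVt' x₀ s)
        (hc2.intervalIntegrable t T)
    have hint : ∫ s in t..T, γ s * b s = V x₀ T - V x₀ t := by
      rw [intervalIntegral.integral_congr hγb, hFTC2]
    rw [ha t, hint, hVT x₀]
    ring
  -- main spatial representation
  intro x t ht
  have hφc : Continuous (fun y => φ y t) := by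
    have he : (fun y => φ y t) = fun y => -(fderiv ℝ g1 (y,t) (1,0)) / g1 (y,t) :=
      funext fun y => hφ' y t
    rw [he]
    exact ((hcfd.comp (continuous_id.prodMk continuous_const)).neg).div (hc1 t)
      (fun y => (hg1pos y t ht).ne')
  have hlog : ∀ y, HasDerivAt (fun z => Real.log (g1 (z,t))) (-(φ y t)) y := by
    intro y
    have h := (hgx y t ht).log (hg1pos y t ht).ne'
    rwa [mul_div_assoc, div_self (hg1pos y t ht).ne', mul_one] at h
  have hexp : ∀ ξ : ℝ, Real.exp (-∫ η in x₀..ξ, φ η t) = g1 (ξ,t) / g1 (x₀,t) := by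
    intro ξ
    have hint : ∫ η in x₀..ξ, -(φ η t) =
        Real.log (g1 (ξ,t)) - Real.log (g1 (x₀,t)) :=
      intervalIntegral.integral_eq_sub_of_hasDerivAt (fun y _ => hlog y)
        ((hφc.neg).intervalIntegrable x₀ ξ)
    rw [show -∫ η in x₀..ξ, φ η t = ∫ η in x₀..ξ, -(φ η t) by
        rw [intervalIntegral.integral_neg],
      hint, Real.exp_sub, Real.exp_log (hg1pos ξ t ht), Real.exp_log (hg1pos x₀ t ht)]
  have hintg : ∫ ξ in x₀..x, g1 (ξ,t) = V x t - V x₀ t :=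
    intervalIntegral.integral_eq_sub_of_hasDerivAt (fun ξ _ => hVx' ξ t)
      ((hc1 t).intervalIntegrable x₀ x)
  have hI : ∫ ξ in x₀..x, Real.exp (-∫ η in x₀..ξ, φ η t) =
      (V x t - V x₀ t) / g1 (x₀,t) := by
    simp_rw [hexp]
    rw [intervalIntegral.integral_div, hintg]
  rw [hI, ← hBeq t ht, ← hAeq t ht,
    mul_div_cancel₀ _ (hg1pos x₀ t ht).ne']
  ring
end

section
/- Let Δ ⊆ ℝⁿ be a nonempty compact set, let μ, σ : ℝⁿ → ℝ be continuous, define f(φ,θ) = -μ(θ) + (φ/2)·σ(θ)² and α(φ) = min_{θ∈Δ} f(φ,θ). Suppose that at some φ₀ ∈ ℝ the minimum α(φ₀) is attained at a unique point θ̂ ∈ Δ (i.e., f(φ₀,θ) > α(φ₀) for all θ ∈ Δ with θ ≠ θ̂). Then α is differentiable at φ₀ and α'(φ₀) = (1/2)·σ(θ̂)². -/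
/-!
Write `f φ θ = a θ + φ * b θ` and let `θ̂` be the unique minimiser at `φ₀`. Testing the infimum
at `θ̂` gives `α φ ≤ α φ₀ + (φ - φ₀) b θ̂`. Conversely,
`f φ θ - α φ₀ - (φ - φ₀) b θ̂ = h θ + (φ - φ₀) d θ` with `h := f φ₀ - α φ₀ ≥ 0` and
`d := b - b θ̂`. Off the compact set where `|d| ≥ ε`, the perturbation is at least `-ε |φ - φ₀|`;
on it, `h` is bounded below by some `δ > 0` because `θ̂` is not in it, and `δ` absorbs the
perturbation once `|φ - φ₀|` is small. Hence `α φ ≥ α φ₀ + (φ - φ₀) b θ̂ - ε |φ - φ₀|`.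
-/

open Filter Topology Set

section Envelope

variable {X : Type*} [TopologicalSpace X] {Δ : Set X}

theorem IsCompact.exists_pos_le_of_le_abs {h d : X → ℝ} (hΔ : IsCompact Δ)
    (hh : ContinuousOn h Δ) (hd : ContinuousOn d Δ) {θhat : X} (hdθ : d θhat = 0)
    (hpos : ∀ θ ∈ Δ, θ ≠ θhat → 0 < h θ) {ε : ℝ} (hε : 0 < ε) :
    ∃ δ > 0, ∀ θ ∈ Δ, ε ≤ |d θ| → δ ≤ h θ := by
  have hK : IsCompact (Δ ∩ (fun θ => |d θ|) ⁻¹' Ici ε) :=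
    hd.abs.upperSemicontinuousOn.isCompact_inter_preimage_Ici hΔ ε
  obtain ⟨δ, hδ, hle⟩ := hK.exists_forall_le' (hh.mono inter_subset_left) (a := 0)
    fun θ ⟨hθΔ, hθε⟩ => hpos θ hθΔ (by rintro rfl; simp [hdθ] at hθε; linarith)
  exact ⟨δ, hδ, fun θ hθΔ hθε => hle θ ⟨hθΔ, hθε⟩⟩

theorem IsCompact.eventually_forall_neg_mul_abs_le_add_mul {h d : X → ℝ} (hΔ : IsCompact Δ)
    (hh : ContinuousOn h Δ) (hd : ContinuousOn d Δ) {θhat : X} (hdθ : d θhat = 0)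
    (hnonneg : ∀ θ ∈ Δ, 0 ≤ h θ) (hpos : ∀ θ ∈ Δ, θ ≠ θhat → 0 < h θ) {ε : ℝ} (hε : 0 < ε) :
    ∀ᶠ t in 𝓝 0, ∀ θ ∈ Δ, -(ε * |t|) ≤ h θ + t * d θ := by
  obtain ⟨δ, hδ, hδle⟩ := hΔ.exists_pos_le_of_le_abs hh hd hdθ hpos hε
  obtain ⟨M, hM⟩ := hΔ.exists_bound_of_continuousOn hd
  have hsmall : ∀ᶠ t : ℝ in 𝓝 0, |t| * M < δ := by
    have hcont : Continuous fun t : ℝ => |t| * M := continuous_abs.mul continuous_const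
    exact (hcont.tendsto' 0 0 (by simp)).eventually (gt_mem_nhds hδ)
  filter_upwards [hsmall] with t ht θ hθ
  have hperturb : -(|t| * |d θ|) ≤ t * d θ := by
    rw [← abs_mul]; exact neg_abs_le _
  rcases le_or_gt ε |d θ| with hbig | hlt
  · have hdM : |t| * |d θ| ≤ |t| * M :=
      mul_le_mul_of_nonneg_left (by simpa using hM θ hθ) (abs_nonneg t)
    linarith [hδle θ hθ hbig, mul_nonneg hε.le (abs_nonneg t)]
  · have hdε : |t| * |d θ| ≤ |t| * ε := mul_le_mul_of_nonneg_left hlt.le (abs_nonneg t)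
    linarith [hnonneg θ hθ, mul_comm ε |t|]

theorem IsCompact.hasDerivAt_sInf_image_add_mul {a b : X → ℝ} (hΔ : IsCompact Δ)
    (ha : ContinuousOn a Δ) (hb : ContinuousOn b Δ) {φ₀ : ℝ} {θhat : X} (hθΔ : θhat ∈ Δ)
    (hmin : ∀ θ ∈ Δ, θ ≠ θhat → a θhat + φ₀ * b θhat < a θ + φ₀ * b θ) :
    HasDerivAt (fun φ => sInf ((fun θ => a θ + φ * b θ) '' Δ)) (b θhat) φ₀ := by
  set f : ℝ → X → ℝ := fun φ θ => a θ + φ * b θ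
  have hfc (φ : ℝ) : ContinuousOn (f φ) Δ := ha.add (continuousOn_const.mul hb)
  have hbdd (φ : ℝ) : BddBelow (f φ '' Δ) := (hΔ.image_of_continuousOn (hfc φ)).bddBelow
  have hle : ∀ θ ∈ Δ, f φ₀ θhat ≤ f φ₀ θ := fun θ hθ => by
    rcases eq_or_ne θ θhat with rfl | hne
    exacts [le_rfl, (hmin θ hθ hne).le]
  have hα₀ : sInf (f φ₀ '' Δ) = f φ₀ θhat :=
    IsLeast.csInf_eq ⟨mem_image_of_mem _ hθΔ, forall_mem_image.2 hle⟩
  rw [hasDerivAt_iff_isLittleO_nhds_zero, Asymptotics.isLittleO_iff]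
  intro ε hε
  have hlower := hΔ.eventually_forall_neg_mul_abs_le_add_mul (ε := ε)
    (h := fun θ => f φ₀ θ - f φ₀ θhat) (d := fun θ => b θ - b θhat)
    ((hfc φ₀).sub continuousOn_const) (hb.sub continuousOn_const) (sub_self _)
    (fun θ hθ => sub_nonneg.2 (hle θ hθ)) (fun θ hθ hne => sub_pos.2 (hmin θ hθ hne)) hε
  filter_upwards [hlower] with t ht
  have hupper : sInf (f (φ₀ + t) '' Δ) ≤ f (φ₀ + t) θhat :=
    csInf_le (hbdd _) (mem_image_of_mem _ hθΔ)
  have hlow : f φ₀ θhat + t * b θhat - ε * |t| ≤ sInf (f (φ₀ + t) '' Δ) := by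
    refine le_csInf ((nonempty_of_mem hθΔ).image _) ?_
    rintro _ ⟨θ, hθ, rfl⟩
    linarith [ht θ hθ, show f (φ₀ + t) θ = f φ₀ θ + t * b θ by simp only [f]; ring]
  have hθt : f (φ₀ + t) θhat = f φ₀ θhat + t * b θhat := by simp only [f]; ring
  show |sInf (f (φ₀ + t) '' Δ) - sInf (f φ₀ '' Δ) - t * b θhat| ≤ ε * |t|
  rw [hα₀, abs_le]
  constructor <;> linarith

end Envelope

theorem stmt_14_general {n : ℕ} (Δ : Set (Fin n → ℝ)) (hcomp : IsCompact Δ)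
    (μ σ : (Fin n → ℝ) → ℝ) (hμ : Continuous μ) (hσ : Continuous σ)
    (f : ℝ → (Fin n → ℝ) → ℝ)
    (hf : ∀ φ θ, f φ θ = -μ θ + (φ / 2) * (σ θ) ^ 2)
    (α : ℝ → ℝ) (hα : ∀ φ, α φ = sInf ((f φ) '' Δ))
    (φ₀ : ℝ) (θhat : Fin n → ℝ) (hθΔ : θhat ∈ Δ)
    (hmin : f φ₀ θhat = α φ₀)
    (huniq : ∀ θ ∈ Δ, θ ≠ θhat → α φ₀ < f φ₀ θ) :
    HasDerivAt α ((1 / 2) * (σ θhat) ^ 2) φ₀ := by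
  have hf' : f = fun φ θ => -μ θ + φ * ((1 / 2) * σ θ ^ 2) := by
    ext φ θ; rw [hf]; ring
  have hα' : α = fun φ => sInf ((fun θ => -μ θ + φ * ((1 / 2) * σ θ ^ 2)) '' Δ) := by
    ext φ; rw [hα, hf']
  rw [hα']
  refine hcomp.hasDerivAt_sInf_image_add_mul (by fun_prop) (by fun_prop) hθΔ fun θ hθ hne => by
    simpa only [← hmin, hf'] using huniq θ hθ hne

/-- envelope / Danskin formula: if the minimum defining
`α(φ) = min_{θ∈Δ} f(φ,θ)` with `f(φ,θ) = -μ(θ) + (φ/2)σ(θ)²` is attained at `φ₀`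
at a unique point `θ̂ ∈ Δ`, then `α` is differentiable at `φ₀` with
`α'(φ₀) = (1/2)σ(θ̂)²`. -/
theorem stmt_14 {n : ℕ} (Δ : Set (Fin n → ℝ)) (hne : Δ.Nonempty) (hcomp : IsCompact Δ)
    (μ σ : (Fin n → ℝ) → ℝ) (hμ : Continuous μ) (hσ : Continuous σ)
    (f : ℝ → (Fin n → ℝ) → ℝ)
    (hf : ∀ φ θ, f φ θ = -μ θ + (φ / 2) * (σ θ) ^ 2)
    (α : ℝ → ℝ) (hα : ∀ φ, α φ = sInf ((f φ) '' Δ))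
    (φ₀ : ℝ) (θhat : Fin n → ℝ) (hθΔ : θhat ∈ Δ)
    (hmin : f φ₀ θhat = α φ₀)
    (huniq : ∀ θ ∈ Δ, θ ≠ θhat → α φ₀ < f φ₀ θ) :
    HasDerivAt α ((1 / 2) * (σ θhat) ^ 2) φ₀ :=
  stmt_14_general Δ hcomp μ σ hμ hσ f hf α hα φ₀ θhat hθΔ hmin huniq
end

section
/- Let Σ ∈ ℝⁿˣⁿ be a symmetric positive definite matrix, μ ∈ ℝⁿ, and let Δ be a nonempty closed convex subset of the simplex S = {θ ∈ ℝⁿ : θ ≥ 0, 1ᵀθ = 1}. For φ > -1 let θ̂(φ) ∈ Δ denote the unique minimizer of θ ↦ -μᵀθ + ((φ+1)/2)·θᵀΣθ over Δ. Then θ̂ is locally Lipschitz continuous on (-1, ∞): for every compact interval [φ₁, φ₂] ⊂ (-1, ∞) there exists L ≥ 0 such that ‖θ̂(φ) - θ̂(φ')‖ ≤ L·|φ - φ'| for all φ, φ' ∈ [φ₁, φ₂]. -/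
open scoped Matrix

/-!
If `x` and `y` minimize `θ ↦ -ℓ θ + (a/2) B θ θ` and `θ ↦ -ℓ θ + (b/2) B θ θ` over a convex set,
testing both minimality conditions at the midpoint `(x + y)/2` and adding them cancels the linear
term and leaves `(a + b) B(x - y, x - y) ≤ 2 (b - a) B(x + y, x - y)`. Coercivity bounds the left
side below by `(a + b) c ‖x - y‖²`, and on a bounded set the right side is at most a constant times
`|a - b| ‖x - y‖`. Hence the minimizer is Lipschitz in `a` on every `[a₀, ∞)` with `a₀ > 0`;
the theorem is the case `a = φ + 1`, with the simplex in the unit ball.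
-/

section QuadraticObjective

variable {E : Type*} [NormedAddCommGroup E] [NormedSpace ℝ E]

noncomputable def quadObjective (ℓ : E →ₗ[ℝ] ℝ) (B : E →L[ℝ] E →L[ℝ] ℝ) (a : ℝ) (θ : E) : ℝ :=
  -ℓ θ + a / 2 * B θ θ

theorem isCoercive_of_apply_self_pos [FiniteDimensional ℝ E] (B : E →L[ℝ] E →L[ℝ] ℝ)
    (hB : ∀ u, u ≠ 0 → 0 < B u u) : IsCoercive B := by
  rcases subsingleton_or_nontrivial E with hE | hE
  · exact ⟨1, one_pos, fun u => by simp [Subsingleton.elim u 0]⟩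
  have hcont : Continuous fun u => B u u := by fun_prop
  obtain ⟨w, hw, hwmin⟩ := (isCompact_sphere (0 : E) 1).exists_isMinOn
    (NormedSpace.sphere_nonempty.2 zero_le_one) hcont.continuousOn
  have hw0 : w ≠ 0 := ne_zero_of_mem_unit_sphere ⟨w, hw⟩
  refine ⟨B w w, hB w hw0, fun u => ?_⟩
  rcases eq_or_ne u 0 with rfl | hu
  · simp
  have hnu : 0 < ‖u‖ := norm_pos_iff.2 hu
  have hmin : B w w ≤ B (‖u‖⁻¹ • u) (‖u‖⁻¹ • u) :=
    hwmin (by simp [norm_smul, inv_mul_cancel₀ hnu.ne'])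
  calc B w w * ‖u‖ * ‖u‖ ≤ B (‖u‖⁻¹ • u) (‖u‖⁻¹ • u) * ‖u‖ * ‖u‖ := by gcongr
    _ = B u u := by
      simp only [map_smul, smul_apply, smul_eq_mul]
      field_simp

theorem add_mul_apply_sub_sub_le_of_isMinOn {ℓ : E →ₗ[ℝ] ℝ} {B : E →L[ℝ] E →L[ℝ] ℝ}
    (hB : ∀ u v, B u v = B v u) {Δ : Set E} (hΔ : Convex ℝ Δ) {a b : ℝ} {x y : E}
    (hx : x ∈ Δ) (hy : y ∈ Δ) (hxmin : IsMinOn (quadObjective ℓ B a) Δ x)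
    (hymin : IsMinOn (quadObjective ℓ B b) Δ y) :
    (a + b) * B (x - y) (x - y) ≤ 2 * (b - a) * B (x + y) (x - y) := by
  have hm : (1 / 2 : ℝ) • x + (1 / 2 : ℝ) • y ∈ Δ :=
    hΔ hx hy (by norm_num) (by norm_num) (by norm_num)
  have hxm := isMinOn_iff.1 hxmin _ hm
  have hym := isMinOn_iff.1 hymin _ hm
  simp only [quadObjective, map_add, map_sub, map_smul, add_apply, sub_apply, smul_apply,
    smul_eq_mul, hB y x] at hxm hym ⊢
  linarith

theorem norm_sub_le_of_isMinOn {ℓ : E →ₗ[ℝ] ℝ} {B : E →L[ℝ] E →L[ℝ] ℝ}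
    (hB : ∀ u v, B u v = B v u) {c : ℝ} (hc : 0 < c) (hcB : ∀ u, c * ‖u‖ * ‖u‖ ≤ B u u)
    {Δ : Set E} (hΔ : Convex ℝ Δ) {R : ℝ} (hΔR : Δ ⊆ Metric.closedBall 0 R)
    {a₀ a b : ℝ} (ha₀ : 0 < a₀) (ha : a₀ ≤ a) (hb : a₀ ≤ b) {x y : E}
    (hx : x ∈ Δ) (hy : y ∈ Δ) (hxmin : IsMinOn (quadObjective ℓ B a) Δ x)
    (hymin : IsMinOn (quadObjective ℓ B b) Δ y) :
    ‖x - y‖ ≤ 2 * R * ‖B‖ / (a₀ * c) * |a - b| := by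
  have hxR := mem_closedBall_zero_iff.1 (hΔR hx)
  have hyR := mem_closedBall_zero_iff.1 (hΔR hy)
  have hR : 0 ≤ R := (norm_nonneg x).trans hxR
  set d := ‖x - y‖
  have hBxy : (b - a) * B (x + y) (x - y) ≤ |a - b| * (‖B‖ * (2 * R) * d) :=
    calc (b - a) * B (x + y) (x - y) ≤ |b - a| * |B (x + y) (x - y)| :=
          (le_abs_self _).trans (abs_mul _ _).le
      _ ≤ |a - b| * (‖B‖ * (2 * R) * d) := by
          rw [abs_sub_comm, ← Real.norm_eq_abs (B _ _)]
          gcongr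
          refine (B.le_opNorm₂ _ _).trans ?_
          gcongr
          linarith [norm_add_le x y]
  have key : d * (a₀ * c * d) ≤ d * (2 * R * ‖B‖ * |a - b|) :=
    calc d * (a₀ * c * d) ≤ (a + b) / 2 * (c * d * d) := by
          have : 0 ≤ c * d * d := by positivity
          nlinarith
      _ ≤ (a + b) / 2 * B (x - y) (x - y) := by gcongr; linarith; exact hcB _
      _ ≤ (b - a) * B (x + y) (x - y) := by
          linarith [add_mul_apply_sub_sub_le_of_isMinOn hB hΔ hx hy hxmin hymin]
      _ ≤ d * (2 * R * ‖B‖ * |a - b|) := hBxy.trans_eq (by ring)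
  rcases (show 0 ≤ d from norm_nonneg _).eq_or_lt with hd | hd
  · rw [← hd]; positivity
  rw [div_mul_eq_mul_div, le_div_iff₀ (by positivity)]
  nlinarith [le_of_mul_le_mul_left key hd]

end QuadraticObjective

theorem Matrix.PosDef.isCoercive_toBilin' {n : ℕ} {Q : Matrix (Fin n) (Fin n) ℝ} (hQ : Q.PosDef) :
    IsCoercive (Matrix.toBilin' Q).toContinuousBilinearMap :=
  isCoercive_of_apply_self_pos _ fun u hu => by
    simpa [Matrix.toBilin'_apply'] using hQ.dotProduct_mulVec_pos hu

theorem stmt_17_general {n : ℕ} (Q : Matrix (Fin n) (Fin n) ℝ) (hsymm : Q.IsSymm) (hpd : Q.PosDef)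
    (μ : Fin n → ℝ) (Δ : Set (Fin n → ℝ))
    (hcv : Convex ℝ Δ)
    (hsub : Δ ⊆ {θ : Fin n → ℝ | (∀ i, 0 ≤ θ i) ∧ ∑ i, θ i = 1})
    (θhat : ℝ → (Fin n → ℝ))
    (hθhat : ∀ φ : ℝ, -1 < φ → θhat φ ∈ Δ ∧ ∀ θ ∈ Δ,
      -(μ ⬝ᵥ θhat φ) + ((φ + 1) / 2) * (θhat φ ⬝ᵥ Q.mulVec (θhat φ)) ≤
        -(μ ⬝ᵥ θ) + ((φ + 1) / 2) * (θ ⬝ᵥ Q.mulVec θ)) :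
    ∀ φ₁ φ₂ : ℝ, -1 < φ₁ → φ₁ ≤ φ₂ →
      ∃ L : ℝ, 0 ≤ L ∧ ∀ φ ∈ Set.Icc φ₁ φ₂, ∀ φ' ∈ Set.Icc φ₁ φ₂,
        ‖θhat φ - θhat φ'‖ ≤ L * |φ - φ'| := by
  set B := (Matrix.toBilin' Q).toContinuousBilinearMap
  have hB : ∀ u v, B u v = B v u := (Matrix.isSymm_toBilin'_iff_isSymm.2 hsymm).eq
  have hmin : ∀ φ, -1 < φ →
      θhat φ ∈ Δ ∧ IsMinOn (quadObjective (dotProductBilin ℝ ℝ μ) B (φ + 1)) Δ (θhat φ) :=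
    fun φ hφ => ⟨(hθhat φ hφ).1, isMinOn_iff.2 fun θ hθ => by
      simpa [quadObjective, B, Matrix.toBilin'_apply'] using (hθhat φ hφ).2 θ hθ⟩
  obtain ⟨c, hc, hcB⟩ := hpd.isCoercive_toBilin'
  intro φ₁ φ₂ hφ₁ _
  have ha₀ : 0 < φ₁ + 1 := by linarith
  refine ⟨2 * ‖B‖ / ((φ₁ + 1) * c), by positivity, fun φ hφ φ' hφ' => ?_⟩
  obtain ⟨hx, hxmin⟩ := hmin φ (hφ₁.trans_le hφ.1)
  obtain ⟨hy, hymin⟩ := hmin φ' (hφ₁.trans_le hφ'.1)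
  simpa using norm_sub_le_of_isMinOn hB hc hcB hcv (hsub.trans stdSimplex_subset_closedBall)
    ha₀ (by linarith [hφ.1]) (by linarith [hφ'.1]) hx hy hxmin hymin

/-- with `Q`, `μ`, `Δ` as before and `θ̂(φ)` the unique minimizer of
`θ ↦ -μᵀθ + ((φ+1)/2)θᵀQθ` over `Δ` for `φ > -1`, the map `θ̂` is locally Lipschitz
on `(-1, ∞)`: on every compact interval `[φ₁, φ₂] ⊂ (-1, ∞)` there is `L ≥ 0` with
`‖θ̂(φ) - θ̂(φ')‖ ≤ L·|φ - φ'|`. -/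
theorem stmt_17 {n : ℕ} (Q : Matrix (Fin n) (Fin n) ℝ) (hsymm : Q.IsSymm) (hpd : Q.PosDef)
    (μ : Fin n → ℝ) (Δ : Set (Fin n → ℝ)) (hne : Δ.Nonempty)
    (hcl : IsClosed Δ) (hcv : Convex ℝ Δ)
    (hsub : Δ ⊆ {θ : Fin n → ℝ | (∀ i, 0 ≤ θ i) ∧ ∑ i, θ i = 1})
    (θhat : ℝ → (Fin n → ℝ))
    (hθhat : ∀ φ : ℝ, -1 < φ → θhat φ ∈ Δ ∧ ∀ θ ∈ Δ,
      -(μ ⬝ᵥ θhat φ) + ((φ + 1) / 2) * (θhat φ ⬝ᵥ Q.mulVec (θhat φ)) ≤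
        -(μ ⬝ᵥ θ) + ((φ + 1) / 2) * (θ ⬝ᵥ Q.mulVec θ)) :
    ∀ φ₁ φ₂ : ℝ, -1 < φ₁ → φ₁ ≤ φ₂ →
      ∃ L : ℝ, 0 ≤ L ∧ ∀ φ ∈ Set.Icc φ₁ φ₂, ∀ φ' ∈ Set.Icc φ₁ φ₂,
        ‖θhat φ - θhat φ'‖ ≤ L * |φ - φ'| :=
  stmt_17_general Q hsymm hpd μ Δ hcv hsub θhat hθhat
end
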